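/- With the notation of the context, I(w) = −(1/(ab))·I(h₁ + h₇), where w(t,s) = 1/(t(s−1)). -/

import Mathlib

open MeasureTheory

/-- The Dotsenko–Fateev weight `Φ(t,s) = |t|^a|s|^a|t−1|^b|s−1|^b|t−x|^c|s−y|^c|t−s|^g`. -/
noncomputable def dfWeight (a b c g x y : ℝ) (p : ℝ × ℝ) : ℝ :=
  |p.1| ^ a * |p.2| ^ a * |p.1 - 1| ^ b * |p.2 - 1| ^ b *
    |p.1 - x| ^ c * |p.2 - y| ^ c * |p.1 - p.2| ^ g

/-- The complement in `ℝ²` of the seven lines `t=0, t=1, t=x, s=0, s=1, s=y, t=s`. -/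
def dfComplement (x y : ℝ) : Set (ℝ × ℝ) :=
  {p | p.1 ≠ 0 ∧ p.1 ≠ 1 ∧ p.1 ≠ x ∧ p.2 ≠ 0 ∧ p.2 ≠ 1 ∧ p.2 ≠ y ∧ p.1 ≠ p.2}

/-- `I(h) = ∫_σ Φ h`. -/
noncomputable def dfInt (a b c g x y : ℝ) (σ : Set (ℝ × ℝ)) (h : ℝ × ℝ → ℝ) : ℝ :=
  ∫ p in σ, dfWeight a b c g x y p * h p

/-- `h₁ = bc/((t−x)(s−1))`. -/
noncomputable def h1 (b c x : ℝ) (p : ℝ × ℝ) : ℝ := b * c / ((p.1 - x) * (p.2 - 1))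

/-- `h₂ = bc/((t−1)(s−y))`. -/
noncomputable def h2 (b c y : ℝ) (p : ℝ × ℝ) : ℝ := b * c / ((p.1 - 1) * (p.2 - y))

/-- `h₃ = −cg/((t−x)(t−s))`. -/
noncomputable def h3 (c g x : ℝ) (p : ℝ × ℝ) : ℝ := -(c * g) / ((p.1 - x) * (p.1 - p.2))

/-- `h₄ = −cg/((s−y)(t−s))`. -/
noncomputable def h4 (c g y : ℝ) (p : ℝ × ℝ) : ℝ := -(c * g) / ((p.2 - y) * (p.1 - p.2))

/-- `h₅ = c²/((t−x)(s−y))`. -/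
noncomputable def h5 (c x y : ℝ) (p : ℝ × ℝ) : ℝ := c ^ 2 / ((p.1 - x) * (p.2 - y))

/-- `h₆ = −bg/((t−1)(t−s)) − bg/((s−1)(t−s))`. -/
noncomputable def h6 (b g : ℝ) (p : ℝ × ℝ) : ℝ :=
  -(b * g) / ((p.1 - 1) * (p.1 - p.2)) - b * g / ((p.2 - 1) * (p.1 - p.2))

/-- `h₇ = b²/((t−1)(s−1)) + bg/((s−1)(t−s))`. -/
noncomputable def h7 (b g : ℝ) (p : ℝ × ℝ) : ℝ :=
  b ^ 2 / ((p.1 - 1) * (p.2 - 1)) + b * g / ((p.2 - 1) * (p.1 - p.2))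

open Set

/-!
The integrand is an exact `t`-derivative: with `L = a/t + b/(t-1) + c/(t-x) + g/(t-s)` the
logarithmic `t`-derivative of `Φ`, one has `L / (a(s-1)) = w + (h₁ + h₇)/(ab)` identically, so
`Φ w + Φ (h₁ + h₇)/(ab) = ∂ₜ (Φ / (a(s-1)))`. The chamber `σ` is a bounded convex open set (an
intersection of half-planes), so each horizontal slice of `σ` is an open interval whose endpoints lie
on the arrangement, where `Φ` vanishes because all exponents are positive. By Fubini and the
fundamental theorem of calculus on each slice the integral of the derivative is `0`.
Both integrands are continuous, hence integrable on the bounded chamber: each simple pole is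
absorbed by the corresponding factor `|ℓ|^e` of `Φ`, leaving the continuous function `|ℓ|^e/ℓ`.
-/

lemma hasDerivAt_abs_rpow' {e : ℝ} (he : 1 < e) (t : ℝ) :
    HasDerivAt (fun u : ℝ => |u| ^ e) (|t| ^ e * (e / t)) t := by
  refine (hasDerivAt_abs_rpow t he).congr_deriv ?_
  rcases eq_or_ne t 0 with rfl | ht
  · simp
  · rw [Real.rpow_sub (abs_pos.2 ht), Real.rpow_two, sq_abs]
    field_simp

/-- At `u = 0` the junk value `0 / 0 = 0` is also the limit. -/
lemma continuous_abs_rpow_div_self {e : ℝ} (he : 1 < e) :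
    Continuous fun u : ℝ => |u| ^ e / u := by
  have hderiv : deriv (fun u : ℝ => |u| ^ e) = fun u => e * (|u| ^ e / u) := by
    funext u
    rw [(hasDerivAt_abs_rpow' he u).deriv]
    ring
  have hcont : Continuous (deriv fun u : ℝ => |u| ^ e) :=
    (contDiff_norm_rpow (E := ℝ) he).continuous_deriv_one
  rw [hderiv] at hcont
  convert hcont.const_mul e⁻¹ using 2 with u
  field_simp [(zero_lt_one.trans he).ne']

@[fun_prop]
lemma Continuous.abs_rpow_const {X : Type*} [TopologicalSpace X] {f : X → ℝ} (hf : Continuous f)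
    {e : ℝ} (he : 0 ≤ e) : Continuous fun z => |f z| ^ e :=
  hf.abs.rpow_const fun _ => Or.inr he

@[fun_prop]
lemma Continuous.abs_rpow_div_self {X : Type*} [TopologicalSpace X] {f : X → ℝ}
    (hf : Continuous f) {e : ℝ} (he : 1 < e) : Continuous fun z => |f z| ^ e / f z :=
  (continuous_abs_rpow_div_self he).comp hf

lemma Continuous.integrableOn_of_isBounded {X E : Type*} [MetricSpace X] [ProperSpace X]
    [MeasurableSpace X] [OpensMeasurableSpace X] {μ : Measure X} [IsFiniteMeasureOnCompacts μ]
    [NormedAddCommGroup E] {f : X → E} (hf : Continuous f) {s : Set X}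
    (hs : Bornology.IsBounded s) : IntegrableOn f s μ :=
  (hf.continuousOn.integrableOn_compact hs.isCompact_closure).mono_set subset_closure

lemma Convex.eq_Ioo_csInf_csSup {S : Set ℝ} (hc : Convex ℝ S) (ho : IsOpen S)
    (hb : Bornology.IsBounded S) (hne : S.Nonempty) : S = Ioo (sInf S) (sSup S) := by
  refine Subset.antisymm (fun t ht => ⟨?_, ?_⟩)
    (IsConnected.Ioo_csInf_csSup_subset ⟨hne, hc.isPreconnected⟩ hb.bddBelow hb.bddAbove)
  · obtain ⟨l, u, ⟨hl, hu⟩, hsub⟩ := mem_nhds_iff_exists_Ioo_subset.1 (ho.mem_nhds ht)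
    calc sInf S ≤ (l + t) / 2 := csInf_le hb.bddBelow (hsub ⟨by linarith, by linarith⟩)
      _ < t := by linarith
  · obtain ⟨l, u, ⟨hl, hu⟩, hsub⟩ := mem_nhds_iff_exists_Ioo_subset.1 (ho.mem_nhds ht)
    calc t < (t + u) / 2 := by linarith
      _ ≤ sSup S := le_csSup hb.bddAbove (hsub ⟨by linarith, by linarith⟩)

lemma IsPreconnected.mul_pos_of_ne_zero {X : Type*} [TopologicalSpace X] {S : Set X}
    (hS : IsPreconnected S) {f : X → ℝ} (hf : ContinuousOn f S) (hne : ∀ z ∈ S, f z ≠ 0)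
    {p q : X} (hp : p ∈ S) (hq : q ∈ S) : 0 < f p * f q := by
  refine (mul_ne_zero (hne p hp) (hne q hq)).lt_of_le' (not_lt.1 fun hneg => ?_)
  have h0 : (0 : ℝ) ∈ uIcc (f p) (f q) := by
    rcases mul_neg_iff.1 hneg with h | h
    · exact mem_uIcc.2 (Or.inr ⟨h.2.le, h.1.le⟩)
    · exact mem_uIcc.2 (Or.inl ⟨h.1.le, h.2.le⟩)
  obtain ⟨z, hz, hz0⟩ := (hS.image f hf).ordConnected.uIcc_subset (mem_image_of_mem f hp)
    (mem_image_of_mem f hq) h0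
  exact hne z hz hz0

lemma frontier_connectedComponentIn_subset_compl {X : Type*} [TopologicalSpace X]
    [LocallyConnectedSpace X] {K : Set X} (hK : IsOpen K) (p : X) :
    frontier (connectedComponentIn K p) ⊆ Kᶜ := by
  intro r hr hrK
  rw [hK.connectedComponentIn.frontier_eq] at hr
  obtain ⟨q, hqr, hqp⟩ := mem_closure_iff.1 hr.1 _ hK.connectedComponentIn
    (mem_connectedComponentIn hrK)
  rw [connectedComponentIn_eq hqp, ← connectedComponentIn_eq hqr] at hr
  exact hr.2 (mem_connectedComponentIn hrK)

section SignChambers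

variable {E ι : Type*}

lemma connectedComponentIn_setOf_forall_ne_zero [TopologicalSpace E] {f : ι → E → ℝ}
    (hf : ∀ i, Continuous (f i)) {p : E} (hp : ∀ i, f i p ≠ 0)
    (hC : IsPreconnected {q | ∀ i, 0 < f i p * f i q}) :
    connectedComponentIn {q | ∀ i, f i q ≠ 0} p = {q | ∀ i, 0 < f i p * f i q} :=
  Subset.antisymm
    (fun _ hq i => isPreconnected_connectedComponentIn.mul_pos_of_ne_zero (hf i).continuousOn
      (fun z hz => (connectedComponentIn_subset {q | ∀ i, f i q ≠ 0} p hz : ∀ i, f i z ≠ 0) i)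
      (mem_connectedComponentIn (F := {q | ∀ i, f i q ≠ 0}) hp) hq)
    (hC.subset_connectedComponentIn (fun i => mul_self_pos.2 (hp i))
      fun _ hq i => right_ne_zero_of_mul (hq i).ne')

lemma convex_connectedComponentIn_setOf_forall_ne_zero [NormedAddCommGroup E] [NormedSpace ℝ E]
    [FiniteDimensional ℝ E] (f : ι → E →ᵃ[ℝ] ℝ) (p : E) :
    Convex ℝ (connectedComponentIn {q | ∀ i, f i q ≠ 0} p) := by
  by_cases hp : ∀ i, f i p ≠ 0
  · have hC : Convex ℝ {q | ∀ i, 0 < f i p * f i q} := by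
      simp only [ofPred_forall]
      exact convex_iInter fun i => (convex_Ioi 0).affine_preimage (f i p • f i)
    rw [connectedComponentIn_setOf_forall_ne_zero (fun i => (f i).continuous_of_finiteDimensional)
      hp hC.isPreconnected]
    exact hC
  · rw [connectedComponentIn_eq_empty (F := {q | ∀ i, f i q ≠ 0}) hp]
    exact convex_empty

end SignChambers

section Slice

variable {σ : Set (ℝ × ℝ)} {F D : ℝ × ℝ → ℝ}

lemma integral_indicator_slice_eq_zero (hσo : IsOpen σ) (hσc : Convex ℝ σ)
    (hσb : Bornology.IsBounded σ) (hFc : ∀ s, Continuous fun t => F (t, s))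
    (hF0 : ∀ p ∈ frontier σ, F p = 0)
    (hFD : ∀ p ∈ σ, HasDerivAt (fun t => F (t, p.2)) (D p) p.1) (s : ℝ)
    (hDs : Integrable fun t => σ.indicator D (t, s)) :
    ∫ t, σ.indicator D (t, s) = 0 := by
  set S := (fun t : ℝ => (t, s)) ⁻¹' σ
  have hcont : Continuous fun t : ℝ => (t, s) := Continuous.prodMk_left s
  have hSo : IsOpen S := hσo.preimage hcont
  change Integrable (S.indicator fun t => D (t, s)) at hDs
  change ∫ t, S.indicator (fun t => D (t, s)) t = 0
  rw [integrable_indicator_iff hSo.measurableSet] at hDs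
  rw [integral_indicator hSo.measurableSet]
  rcases S.eq_empty_or_nonempty with hS | hne
  · simp [hS]
  have hSc : Convex ℝ S :=
    hσc.affine_preimage ((AffineMap.id ℝ ℝ).prod (AffineMap.const ℝ ℝ s))
  have hSb : Bornology.IsBounded S := hσb.image_fst.subset fun t ht => ⟨(t, s), ht, rfl⟩
  have hSI := hSc.eq_Ioo_csInf_csSup hSo hSb hne
  set l := sInf S
  set u := sSup S
  have hlu : l < u := nonempty_Ioo.1 (hSI ▸ hne)
  have hF0' : ∀ r ∈ closure S, r ∉ S → F (r, s) = 0 := fun r hr hrS =>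
    hF0 _ (hσo.frontier_eq ▸ ⟨hcont.closure_preimage_subset σ hr, hrS⟩)
  have hFl : F (l, s) = 0 := hF0' l (csInf_mem_closure hne hSb.bddBelow) (by rw [hSI]; simp)
  have hFu : F (u, s) = 0 := hF0' u (csSup_mem_closure hne hSb.bddAbove) (by rw [hSI]; simp)
  rw [hSI] at hDs ⊢
  rw [← integral_Ioc_eq_integral_Ioo, ← intervalIntegral.integral_of_le hlu.le,
    intervalIntegral.integral_eq_sub_of_hasDerivAt_of_le hlu.le (hFc s).continuousOn
      (fun t ht => hFD (t, s) (show t ∈ S by rw [hSI]; exact ht))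
      ((intervalIntegrable_iff_integrableOn_Ioo_of_le hlu.le).2 hDs), hFu, hFl, sub_zero]

theorem integral_eq_zero_of_hasDerivAt_fst (hσo : IsOpen σ) (hσc : Convex ℝ σ)
    (hσb : Bornology.IsBounded σ) (hFc : ∀ s, Continuous fun t => F (t, s))
    (hF0 : ∀ p ∈ frontier σ, F p = 0)
    (hFD : ∀ p ∈ σ, HasDerivAt (fun t => F (t, p.2)) (D p) p.1) (hD : IntegrableOn D σ) :
    ∫ p in σ, D p = 0 := by
  have hDi : Integrable (σ.indicator D) (volume.prod volume) := by
    rw [← Measure.volume_eq_prod, integrable_indicator_iff hσo.measurableSet]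
    exact hD
  rw [← integral_indicator hσo.measurableSet, Measure.volume_eq_prod, integral_prod_symm _ hDi]
  refine (integral_congr_ae (hDi.prod_left_ae.mono fun s hs => ?_)).trans (integral_zero _ _)
  exact integral_indicator_slice_eq_zero hσo hσc hσb hFc hF0 hFD s hs

end Slice

def dfLines (x y : ℝ) : Fin 7 → (ℝ × ℝ →ᵃ[ℝ] ℝ) :=
  ![AffineMap.fst, AffineMap.fst - AffineMap.const ℝ _ 1, AffineMap.fst - AffineMap.const ℝ _ x,
    AffineMap.snd, AffineMap.snd - AffineMap.const ℝ _ 1, AffineMap.snd - AffineMap.const ℝ _ y,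
    AffineMap.fst - AffineMap.snd]

noncomputable def dfLogDerivFst (a b c g x : ℝ) (p : ℝ × ℝ) : ℝ :=
  a / p.1 + b / (p.1 - 1) + c / (p.1 - x) + g / (p.1 - p.2)

section DotsenkoFateev

variable {a b c g : ℝ} (x y : ℝ)

lemma dfComplement_eq : dfComplement x y = {q | ∀ i, dfLines x y i q ≠ 0} := by
  ext q
  simp [dfComplement, dfLines, Fin.forall_fin_succ, sub_ne_zero]

lemma isOpen_dfComplement : IsOpen (dfComplement x y) := by
  rw [dfComplement_eq, ofPred_forall]
  exact isOpen_iInter_of_finite fun i =>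
    isOpen_ne_fun (dfLines x y i).continuous_of_finiteDimensional continuous_const

lemma convex_connectedComponentIn_dfComplement (p : ℝ × ℝ) :
    Convex ℝ (connectedComponentIn (dfComplement x y) p) := by
  rw [dfComplement_eq]
  exact convex_connectedComponentIn_setOf_forall_ne_zero _ p

lemma continuous_dfWeight (ha : 0 ≤ a) (hb : 0 ≤ b) (hc : 0 ≤ c) (hg : 0 ≤ g) :
    Continuous (dfWeight a b c g x y) := by
  unfold dfWeight
  fun_prop (disch := assumption)

lemma dfWeight_eq_zero_of_notMem (ha : a ≠ 0) (hb : b ≠ 0) (hc : c ≠ 0) (hg : g ≠ 0)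
    {p : ℝ × ℝ} (hp : p ∉ dfComplement x y) : dfWeight a b c g x y p = 0 := by
  contrapose! hp
  simp only [dfWeight, ne_eq, mul_eq_zero, Real.rpow_eq_zero (abs_nonneg _), ha, hb, hc, hg,
    abs_eq_zero, sub_eq_zero, not_false_eq_true, not_or] at hp
  simp only [dfComplement, mem_ofPred_eq]
  tauto

lemma hasDerivAt_dfWeight_fst (ha : 1 < a) (hb : 1 < b) (hc : 1 < c) (hg : 1 < g)
    (p : ℝ × ℝ) :
    HasDerivAt (fun t => dfWeight a b c g x y (t, p.2))
      (dfWeight a b c g x y p * dfLogDerivFst a b c g x p) p.1 := by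
  have d0 := hasDerivAt_abs_rpow' ha p.1
  have d1 := (hasDerivAt_abs_rpow' hb (p.1 - 1)).comp_sub_const p.1 1
  have dx := (hasDerivAt_abs_rpow' hc (p.1 - x)).comp_sub_const p.1 x
  have ds := (hasDerivAt_abs_rpow' hg (p.1 - p.2)).comp_sub_const p.1 p.2
  show HasDerivAt (fun t => |t| ^ a * |p.2| ^ a * |t - 1| ^ b * |p.2 - 1| ^ b *
    |t - x| ^ c * |p.2 - y| ^ c * |t - p.2| ^ g) _ _
  refine ((((((d0.mul_const (|p.2| ^ a)).mul d1).mul_const (|p.2 - 1| ^ b)).mul dx).mul_const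
    (|p.2 - y| ^ c)).mul ds).congr_deriv ?_
  simp only [dfWeight, dfLogDerivFst, Pi.mul_apply]
  ring

lemma dfLogDerivFst_div_eq (ha : a ≠ 0) (hb : b ≠ 0) (p : ℝ × ℝ) :
    dfLogDerivFst a b c g x p / (a * (p.2 - 1)) =
      1 / (p.1 * (p.2 - 1)) + 1 / (a * b) * (h1 b c x p + h7 b g p) := by
  simp only [dfLogDerivFst, h1, h7, div_eq_mul_inv, mul_inv]
  field_simp
  ring

lemma hasDerivAt_dfWeight_div_fst (ha : 1 < a) (hb : 1 < b) (hc : 1 < c) (hg : 1 < g)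
    (p : ℝ × ℝ) :
    HasDerivAt (fun t => dfWeight a b c g x y (t, p.2) / (a * (p.2 - 1)))
      (dfWeight a b c g x y p * (1 / (p.1 * (p.2 - 1))) +
        1 / (a * b) * (dfWeight a b c g x y p * (h1 b c x p + h7 b g p))) p.1 := by
  refine ((hasDerivAt_dfWeight_fst x y ha hb hc hg p).div_const _).congr_deriv ?_
  rw [mul_div_assoc, dfLogDerivFst_div_eq x (by linarith) (by linarith)]
  ring

lemma continuous_dfWeight_mul_omega15 (ha : 1 < a) (hb : 1 < b) (hc : 0 ≤ c) (hg : 0 ≤ g) :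
    Continuous fun p => dfWeight a b c g x y p * (1 / (p.1 * (p.2 - 1))) := by
  have heq : (fun p => dfWeight a b c g x y p * (1 / (p.1 * (p.2 - 1)))) = fun p =>
      |p.1| ^ a / p.1 * (|p.2 - 1| ^ b / (p.2 - 1)) *
        (|p.2| ^ a * |p.1 - 1| ^ b * |p.1 - x| ^ c * |p.2 - y| ^ c * |p.1 - p.2| ^ g) := by
    funext p
    simp only [dfWeight, div_eq_mul_inv, mul_inv]
    ring
  rw [heq]
  fun_prop (disch := first | assumption | linarith)

lemma continuous_dfWeight_mul_h1_add_h7 (ha : 0 ≤ a) (hb : 1 < b) (hc : 1 < c) (hg : 1 < g) :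
    Continuous fun p => dfWeight a b c g x y p * (h1 b c x p + h7 b g p) := by
  have heq : (fun p => dfWeight a b c g x y p * (h1 b c x p + h7 b g p)) = fun p =>
      |p.1| ^ a * |p.2| ^ a * (|p.2 - 1| ^ b / (p.2 - 1)) *
        (b * c * (|p.1 - x| ^ c / (p.1 - x)) * |p.1 - 1| ^ b * |p.2 - y| ^ c * |p.1 - p.2| ^ g +
          b ^ 2 * (|p.1 - 1| ^ b / (p.1 - 1)) * |p.1 - x| ^ c * |p.2 - y| ^ c * |p.1 - p.2| ^ g +
          b * g * (|p.1 - p.2| ^ g / (p.1 - p.2)) * |p.1 - 1| ^ b * |p.1 - x| ^ c *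
            |p.2 - y| ^ c) := by
    funext p
    simp only [dfWeight, h1, h7, div_eq_mul_inv, mul_inv]
    ring
  rw [heq]
  fun_prop (disch := first | assumption | linarith)

end DotsenkoFateev

theorem expansion_omega15_general (x y a b c g : ℝ)
    (ha : 1 < a) (hb : 1 < b) (hc : 1 < c) (hg : 1 < g)
    (σ : Set (ℝ × ℝ)) (hbd : Bornology.IsBounded σ)
    (hcc : ∃ p ∈ dfComplement x y, σ = connectedComponentIn (dfComplement x y) p) :
    dfInt a b c g x y σ (fun p => 1 / (p.1 * (p.2 - 1))) =
      -(1 / (a * b)) * dfInt a b c g x y σ (fun p => h1 b c x p + h7 b g p) := by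
  obtain ⟨p₀, -, rfl⟩ := hcc
  have ha₀ : 0 < a := by linarith
  have hb₀ : 0 < b := by linarith
  have hc₀ : 0 < c := by linarith
  have hg₀ : 0 < g := by linarith
  have hK := isOpen_dfComplement x y
  have hω := (continuous_dfWeight_mul_omega15 x y ha hb hc₀.le hg₀.le).integrableOn_of_isBounded
    (μ := volume) hbd
  have hη := (continuous_dfWeight_mul_h1_add_h7 x y ha₀.le hb hc hg).integrableOn_of_isBounded
    (μ := volume) hbd
  have hexact := integral_eq_zero_of_hasDerivAt_fst
    (F := fun p => dfWeight a b c g x y p / (a * (p.2 - 1)))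
    hK.connectedComponentIn (convex_connectedComponentIn_dfComplement x y p₀) hbd
    (fun s => ((continuous_dfWeight x y ha₀.le hb₀.le hc₀.le hg₀.le).comp
      (Continuous.prodMk_left s)).div_const (a * (s - 1)))
    (fun p hp => by
      rw [dfWeight_eq_zero_of_notMem x y ha₀.ne' hb₀.ne' hc₀.ne' hg₀.ne'
        (frontier_connectedComponentIn_subset_compl hK p₀ hp), zero_div])
    (fun p _ => hasDerivAt_dfWeight_div_fst x y ha hb hc hg p) (hω.add (hη.const_mul _))
  rw [integral_add hω (hη.const_mul _), integral_const_mul] at hexact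
  unfold dfInt
  linarith

/-- the cohomological expansion ω₁₅ ∼ −(1/(ab))(η₁+η₇)
integrated over a bounded chamber `σ` of the Dotsenko–Fateev arrangement. -/
theorem expansion_omega15 (x y a b c g : ℝ)
    (hx0 : x ≠ 0) (hx1 : x ≠ 1) (hy0 : y ≠ 0) (hy1 : y ≠ 1) (hxy : x ≠ y)
    (ha : 1 < a) (hb : 1 < b) (hc : 1 < c) (hg : 1 < g)
    (σ : Set (ℝ × ℝ)) (hbd : Bornology.IsBounded σ)
    (hcc : ∃ p ∈ dfComplement x y, σ = connectedComponentIn (dfComplement x y) p) :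
    dfInt a b c g x y σ (fun p => 1 / (p.1 * (p.2 - 1))) =
      -(1 / (a * b)) * dfInt a b c g x y σ (fun p => h1 b c x p + h7 b g p) :=
  expansion_omega15_general x y a b c g ha hb hc hg σ hbd hcc
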